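/- arXiv:2212.09558 — 2 statements merged into one kernel-verified Lean document; each statement's English description precedes it below -/
import Mathlib

section
/- Let g be a Lie superalgebra, let (p, P) be a ℤ-covering of g, and let a be a ℤ-graded Lie superalgebra with a Lie superalgebra homomorphism ψ : a → g. Then there exists a unique ℤ-graded Lie superalgebra homomorphism ψ̃ : a → p (i.e., ψ̃(a_s) ⊆ p_s for all s ∈ ℤ) such that P ∘ ψ̃ = ψ. -/
open scoped TensorProduct

/-- The sign `(-1)^(i*j)` for integer degrees `i j`. -/
def ssign (i j : ℤ) : ℤ := if Even (i * j) then 1 else -1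

/-- A Lie superalgebra structure on a `K`-vector space `g`. -/
structure LieSuperAlgebra (K : Type*) [Field K] (g : Type*) [AddCommGroup g] [Module K g] where
  grading : ZMod 2 → Submodule K g
  isInternal : DirectSum.IsInternal grading
  bracket : g →ₗ[K] g →ₗ[K] g
  bracket_mem : ∀ (i j : ZMod 2) (x y : g), x ∈ grading i → y ∈ grading j →
    bracket x y ∈ grading (i + j)
  super_antisymm : ∀ (i j : ZMod 2) (x y : g), x ∈ grading i → y ∈ grading j →
    bracket x y = (-((-1 : ℤ) ^ (i.val * j.val))) • bracket y x
  super_jacobi : ∀ (i j : ZMod 2) (x y z : g), x ∈ grading i → y ∈ grading j →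
    bracket x (bracket y z) =
      bracket (bracket x y) z + ((-1 : ℤ) ^ (i.val * j.val)) • bracket y (bracket x z)

/-- A ℤ-graded Lie superalgebra with parity-matched grading. -/
structure ZGradedLieSuperAlgebra (K : Type*) [Field K] (p : Type*)
    [AddCommGroup p] [Module K p] where
  grading : ℤ → Submodule K p
  isInternal : DirectSum.IsInternal grading
  bracket : p →ₗ[K] p →ₗ[K] p
  bracket_mem : ∀ (i j : ℤ) (x y : p), x ∈ grading i → y ∈ grading j →
    bracket x y ∈ grading (i + j)
  super_antisymm : ∀ (i j : ℤ) (x y : p), x ∈ grading i → y ∈ grading j →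
    bracket x y = (-(ssign i j)) • bracket y x
  super_jacobi : ∀ (i j : ℤ) (x y z : p), x ∈ grading i → y ∈ grading j →
    bracket x (bracket y z) =
      bracket (bracket x y) z + (ssign i j) • bracket y (bracket x z)

variable {K : Type*} [Field K]
variable {g g' g'' p p' p'' a a' : Type*}
  [AddCommGroup g] [Module K g] [AddCommGroup g'] [Module K g']
  [AddCommGroup g''] [Module K g'']
  [AddCommGroup p] [Module K p] [AddCommGroup p'] [Module K p']
  [AddCommGroup p''] [Module K p'']
  [AddCommGroup a] [Module K a] [AddCommGroup a'] [Module K a']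

/-- An (even) homomorphism of Lie superalgebras. -/
def IsSuperHom (G : LieSuperAlgebra K g) (G' : LieSuperAlgebra K g') (f : g →ₗ[K] g') : Prop :=
  (∀ (i : ZMod 2) (x : g), x ∈ G.grading i → f x ∈ G'.grading i) ∧
  ∀ x y : g, f (G.bracket x y) = G'.bracket (f x) (f y)

/-- A ℤ-graded homomorphism of ℤ-graded Lie superalgebras. -/
def IsZGradedHom (P : ZGradedLieSuperAlgebra K p) (P' : ZGradedLieSuperAlgebra K p')
    (f : p →ₗ[K] p') : Prop :=
  (∀ (s : ℤ) (x : p), x ∈ P.grading s → f x ∈ P'.grading s) ∧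
  ∀ x y : p, f (P.bracket x y) = P'.bracket (f x) (f y)

/-- A homomorphism from a ℤ-graded Lie superalgebra to a Lie superalgebra:
an even linear map preserving brackets, sending degree `s` into parity `s mod 2`. -/
def IsHomToSuper (P : ZGradedLieSuperAlgebra K p) (G : LieSuperAlgebra K g)
    (f : p →ₗ[K] g) : Prop :=
  (∀ (s : ℤ) (x : p), x ∈ P.grading s → f x ∈ G.grading (s : ZMod 2)) ∧
  ∀ x y : p, f (P.bracket x y) = G.bracket (f x) (f y)

/-- `(P, π)` is a ℤ-covering of the Lie superalgebra `G`: a homomorphism restricting to a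
bijection `p_s → g_{s̄}` for every `s : ℤ`. -/
def IsZCovering (G : LieSuperAlgebra K g) (P : ZGradedLieSuperAlgebra K p)
    (π : p →ₗ[K] g) : Prop :=
  IsHomToSuper P G π ∧
  ∀ s : ℤ, Set.BijOn π (P.grading s : Set p) (G.grading (s : ZMod 2) : Set g)

/-- `(P, π)` is a ℤ^{≥0}-covering of the Lie superalgebra `G`. -/
def IsZNonnegCovering (G : LieSuperAlgebra K g) (P : ZGradedLieSuperAlgebra K p)
    (π : p →ₗ[K] g) : Prop :=
  IsHomToSuper P G π ∧ (∀ s : ℤ, s < 0 → P.grading s = ⊥) ∧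
  ∀ s : ℤ, 0 ≤ s → Set.BijOn π (P.grading s : Set p) (G.grading (s : ZMod 2) : Set g)

/-- universal property of a ℤ-covering: any homomorphism `ψ : a → g` from a
ℤ-graded Lie superalgebra lifts uniquely to a ℤ-graded homomorphism `ψ̃ : a → p` with
`π ∘ ψ̃ = ψ`. -/
theorem zCovering_universal_property
    (G : LieSuperAlgebra K g) (P : ZGradedLieSuperAlgebra K p) (π : p →ₗ[K] g)
    (hcov : IsZCovering G P π)
    (A : ZGradedLieSuperAlgebra K a) (ψ : a →ₗ[K] g) (hψ : IsHomToSuper A G ψ) :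
    ∃! f : a →ₗ[K] p, IsZGradedHom A P f ∧ π.comp f = ψ := by
    classical
  obtain ⟨⟨hπmem, hπbr⟩, hbij⟩ := hcov
  -- the restriction of π to each graded piece, as a linear equivalence
  have hrestr : ∀ s : ℤ, ∀ x ∈ P.grading s, π x ∈ G.grading (s : ZMod 2) := fun s x hx =>
    hπmem s x hx
  let r : ∀ s : ℤ, (P.grading s →ₗ[K] G.grading ((s : ZMod 2))) := fun s =>
    π.restrict (hrestr s)
  have hrbij : ∀ s : ℤ, Function.Bijective (r s) := by
    intro s
    constructor
    · intro x y hxy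
      apply Subtype.ext
      exact (hbij s).injOn x.2 y.2 (congrArg Subtype.val hxy)
    · intro y
      obtain ⟨x, hx, hxy⟩ := (hbij s).surjOn y.2
      exact ⟨⟨x, hx⟩, Subtype.ext hxy⟩
  let e : ∀ s : ℤ, (P.grading s ≃ₗ[K] G.grading ((s : ZMod 2))) := fun s =>
    LinearEquiv.ofBijective (r s) (hrbij s)
  -- component maps
  let F : ∀ s : ℤ, (A.grading s →ₗ[K] p) := fun s =>
    (P.grading s).subtype ∘ₗ (e s).symm.toLinearMap ∘ₗ ψ.restrict (fun x hx => hψ.1 s x hx)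
  have hFmem : ∀ s (x : A.grading s), F s x ∈ P.grading s := fun s x =>
    ((e s).symm _).2
  have hFπ : ∀ s (x : A.grading s), π (F s x) = ψ x := by
    intro s x
    have := (e s).apply_symm_apply (ψ.restrict (fun x hx => hψ.1 s x hx) x)
    exact congrArg Subtype.val this
  -- the decomposition equivalence for A
  let d : a ≃ₗ[K] (DirectSum ℤ (fun s => ↥(A.grading s))) :=
    (LinearEquiv.ofBijective (DirectSum.coeLinearMap A.grading) A.isInternal).symm
  let f : a →ₗ[K] p := (DirectSum.toModule K ℤ p F) ∘ₗ d.toLinearMap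
  have hd : ∀ (s : ℤ) (x : a) (hx : x ∈ A.grading s),
      d x = DirectSum.of (fun s => A.grading s) s ⟨x, hx⟩ := by
    intro s x hx
    apply (LinearEquiv.ofBijective (DirectSum.coeLinearMap A.grading) A.isInternal).injective
    rw [LinearEquiv.apply_symm_apply]
    exact (DirectSum.coeLinearMap_of A.grading s ⟨x, hx⟩).symm
  have hfx : ∀ (s : ℤ) (x : a) (hx : x ∈ A.grading s), f x = F s ⟨x, hx⟩ := by
    intro s x hx
    show DirectSum.toModule K ℤ p F (d x) = _
    rw [hd s x hx]
    exact DirectSum.toModule_lof (ι := ℤ) (M := fun s => ↥(A.grading s)) K s ⟨x, hx⟩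
  have hfmem : ∀ (s : ℤ) (x : a), x ∈ A.grading s → f x ∈ P.grading s := by
    intro s x hx; rw [hfx s x hx]; exact hFmem s _
  have hfπ : ∀ x : a, π (f x) = ψ x := by
    intro x
    have hx : x ∈ (⊤ : Submodule K a) := trivial
    rw [← A.isInternal.submodule_iSup_eq_top] at hx
    induction hx using Submodule.iSup_induction' with
    | mem s y hy => rw [hfx s y hy, hFπ s ⟨y, hy⟩]
    | zero => simp
    | add y z _ _ hy hz => simp [map_add, hy, hz]
  have hsup : ∀ x : a, x ∈ ⨆ s, A.grading s := by
    intro x; rw [A.isInternal.submodule_iSup_eq_top]; trivial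
  -- bracket preservation
  have hbr : ∀ x y : a, f (A.bracket x y) = P.bracket (f x) (f y) := by
    intro x y
    induction hsup x using Submodule.iSup_induction' with
    | zero => simp
    | add u v _ _ hu hv => simp [map_add, hu, hv]
    | mem s u hu =>
      induction hsup y using Submodule.iSup_induction' with
      | zero => simp
      | add u' v' _ _ hu' hv' => simp [map_add, hu', hv']
      | mem t v hv =>
        have h1 : f (A.bracket u v) ∈ P.grading (s + t) :=
          hfmem _ _ (A.bracket_mem s t u v hu hv)
        have h2 : P.bracket (f u) (f v) ∈ P.grading (s + t) :=
          P.bracket_mem s t _ _ (hfmem s u hu) (hfmem t v hv)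
        apply (hbij (s + t)).injOn h1 h2
        show π _ = π _
        rw [hfπ, hπbr, hfπ, hfπ, hψ.2]
  refine ⟨f, ⟨⟨hfmem, hbr⟩, ?_⟩, ?_⟩
  · ext x; exact hfπ x
  · rintro f' ⟨⟨hf'mem, _⟩, hf'π⟩
    ext x
    induction hsup x using Submodule.iSup_induction' with
    | zero => simp
    | add u v _ _ hu hv => simp [map_add, hu, hv]
    | mem s u hu =>
      apply (hbij s).injOn (hf'mem s u hu) (hfmem s u hu)
      show π _ = π _
      rw [hfπ]
      exact congrFun (congrArg (fun m => m.toFun) hf'π) u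
end

section
/- Let φ : g → g' be a homomorphism of Lie superalgebras, and let (p, P) and (p', P') be ℤ-coverings of g and g' respectively. Then there exists a unique ℤ-graded Lie superalgebra homomorphism φ̃ : p → p' such that P' ∘ φ̃ = φ ∘ P. -/
/-!
In each degree `s` the covering map `π'` restricts to a bijection `p'_s → g'_{s̄}`, so a
degree-preserving lift of `φ ∘ π` is forced to be `(π'|_{p'_s})⁻¹ ∘ φ ∘ π` on `p_s`; gluing these
over the internal direct sum `p = ⊕ p_s` gives existence and uniqueness of the linear lift. It
respects brackets because for `x ∈ p_i`, `y ∈ p_j` both `f [x, y]` and `[f x, f y]` lie in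
`p'_{i+j}`, where `π'` is injective, and have the same image `[φ (π x), φ (π y)]`.
-/

open scoped TensorProduct

variable {K : Type*} [Field K]
variable {g g' g'' p p' p'' a a' : Type*}
  [AddCommGroup g] [Module K g] [AddCommGroup g'] [Module K g']
  [AddCommGroup g''] [Module K g'']
  [AddCommGroup p] [Module K p] [AddCommGroup p'] [Module K p']
  [AddCommGroup p''] [Module K p'']
  [AddCommGroup a] [Module K a] [AddCommGroup a'] [Module K a']

section LinearAlgebra

variable {R ι M N L : Type*} [CommSemiring R] [AddCommMonoid M] [Module R M]
  [AddCommMonoid N] [Module R N] [AddCommMonoid L] [Module R L]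

theorem LinearMap.ext_of_iSup_eq_top {A : ι → Submodule R M} (hA : iSup A = ⊤)
    {f f' : M →ₗ[R] N} (h : ∀ i, ∀ x ∈ A i, f x = f' x) : f = f' :=
  LinearMap.eqLocus_eq_top.1 <| top_le_iff.1 <| hA ▸ iSup_le fun i x hx => h i x hx

theorem LinearMap.ext₂_of_iSup_eq_top {A : ι → Submodule R M} (hA : iSup A = ⊤)
    {B : ι → Submodule R N} (hB : iSup B = ⊤) {f f' : M →ₗ[R] N →ₗ[R] L}
    (h : ∀ i j, ∀ x ∈ A i, ∀ y ∈ B j, f x y = f' x y) : f = f' :=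
  LinearMap.ext_of_iSup_eq_top hA fun i x hx =>
    LinearMap.ext_of_iSup_eq_top hB fun j y hy => h i j x hx y hy

noncomputable def LinearMap.equivOfBijOn (f : M →ₗ[R] N) {A : Submodule R M}
    {B : Submodule R N} (h : Set.BijOn f A B) : A ≃ₗ[R] B :=
  LinearEquiv.ofBijective (f.restrict fun _ hx => h.mapsTo hx) h.bijective

@[simp]
theorem LinearMap.coe_equivOfBijOn_apply (f : M →ₗ[R] N) {A : Submodule R M}
    {B : Submodule R N} (h : Set.BijOn f A B) (x : A) : (f.equivOfBijOn h x : N) = f x :=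
  rfl

noncomputable def DirectSum.IsInternal.lift [DecidableEq ι] {A : ι → Submodule R M}
    (hA : DirectSum.IsInternal A) (f : ∀ i, A i →ₗ[R] N) : M →ₗ[R] N :=
  DirectSum.toModule R ι N f ∘ₗ
    (LinearEquiv.ofBijective (DirectSum.coeLinearMap A) hA).symm.toLinearMap

theorem DirectSum.IsInternal.lift_apply_of_mem [DecidableEq ι] {A : ι → Submodule R M}
    (hA : DirectSum.IsInternal A) (f : ∀ i, A i →ₗ[R] N) {i : ι} {x : M} (hx : x ∈ A i) :
    hA.lift f x = f i ⟨x, hx⟩ := by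
  have hdecomp : (LinearEquiv.ofBijective (DirectSum.coeLinearMap A) hA).symm x =
      DirectSum.lof R ι (fun i => A i) i ⟨x, hx⟩ := by
    rw [LinearEquiv.symm_apply_eq, DirectSum.lof_eq_of]
    exact (DirectSum.coeLinearMap_of A i ⟨x, hx⟩).symm
  simp only [DirectSum.IsInternal.lift, LinearMap.comp_apply, LinearEquiv.coe_coe, hdecomp,
    DirectSum.toModule_lof]

end LinearAlgebra

theorem IsSuperHom.comp_isHomToSuper {G : LieSuperAlgebra K g} {G' : LieSuperAlgebra K g'}
    {P : ZGradedLieSuperAlgebra K p} {φ : g →ₗ[K] g'} {π : p →ₗ[K] g}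
    (hφ : IsSuperHom G G' φ) (hπ : IsHomToSuper P G π) : IsHomToSuper P G' (φ ∘ₗ π) :=
  ⟨fun s x hx => hφ.1 _ _ (hπ.1 s x hx), fun x y => by
    rw [LinearMap.comp_apply, hπ.2, hφ.2, LinearMap.comp_apply, LinearMap.comp_apply]⟩

namespace IsZCovering

variable {G' : LieSuperAlgebra K g'} {P : ZGradedLieSuperAlgebra K p}
  {P' : ZGradedLieSuperAlgebra K p'} {π' : p' →ₗ[K] g'}

theorem eq_of_comp_eq (hcov' : IsZCovering G' P' π') {f f' : p →ₗ[K] p'}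
    (hf : ∀ s, ∀ x ∈ P.grading s, f x ∈ P'.grading s)
    (hf' : ∀ s, ∀ x ∈ P.grading s, f' x ∈ P'.grading s) (h : π' ∘ₗ f = π' ∘ₗ f') : f = f' :=
  LinearMap.ext_of_iSup_eq_top P.isInternal.submodule_iSup_eq_top fun s x hx =>
    (hcov'.2 s).injOn (hf s x hx) (hf' s x hx) (LinearMap.congr_fun h x)

theorem exists_lift (hcov' : IsZCovering G' P' π') {ψ : p →ₗ[K] g'}
    (hψ : ∀ s, ∀ x ∈ P.grading s, ψ x ∈ G'.grading (s : ZMod 2)) :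
    ∃ f : p →ₗ[K] p', (∀ s, ∀ x ∈ P.grading s, f x ∈ P'.grading s) ∧ π' ∘ₗ f = ψ := by
  classical
  let liftGrading s : P.grading s →ₗ[K] P'.grading s :=
    (π'.equivOfBijOn (hcov'.2 s)).symm.toLinearMap ∘ₗ ψ.restrict (hψ s)
  let f := P.isInternal.lift fun s => (P'.grading s).subtype ∘ₗ liftGrading s
  have hf s x (hx : x ∈ P.grading s) : f x = liftGrading s ⟨x, hx⟩ :=
    P.isInternal.lift_apply_of_mem _ hx
  refine ⟨f, fun s x hx => hf s x hx ▸ (liftGrading s ⟨x, hx⟩).2, ?_⟩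
  refine LinearMap.ext_of_iSup_eq_top P.isInternal.submodule_iSup_eq_top fun s x hx => ?_
  rw [LinearMap.comp_apply, hf s x hx, ← LinearMap.coe_equivOfBijOn_apply π' (hcov'.2 s)]
  simp [liftGrading]

theorem isZGradedHom_of_comp (hcov' : IsZCovering G' P' π') {f : p →ₗ[K] p'}
    (hf : ∀ s, ∀ x ∈ P.grading s, f x ∈ P'.grading s)
    (hbr : ∀ x y, π' (f (P.bracket x y)) = G'.bracket (π' (f x)) (π' (f y))) :
    IsZGradedHom P P' f := by
  have hP := P.isInternal.submodule_iSup_eq_top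
  suffices P.bracket.compr₂ f = (P'.bracket ∘ₗ f).compl₂ f from
    ⟨hf, LinearMap.congr_fun₂ this⟩
  refine LinearMap.ext₂_of_iSup_eq_top hP hP fun i j x hx y hy => ?_
  simp only [LinearMap.compr₂_apply, LinearMap.compl₂_apply, LinearMap.comp_apply]
  refine (hcov'.2 (i + j)).injOn (hf _ _ (P.bracket_mem i j x y hx hy))
    (P'.bracket_mem i j _ _ (hf i x hx) (hf j y hy)) ?_
  rw [hbr, hcov'.1.2]

theorem existsUnique_lift (hcov' : IsZCovering G' P' π') {ψ : p →ₗ[K] g'}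
    (hψ : IsHomToSuper P G' ψ) : ∃! f : p →ₗ[K] p', IsZGradedHom P P' f ∧ π' ∘ₗ f = ψ := by
  obtain ⟨f, hf, hfψ⟩ := hcov'.exists_lift hψ.1
  have hfψ' z : π' (f z) = ψ z := LinearMap.congr_fun hfψ z
  have hbr x y : π' (f (P.bracket x y)) = G'.bracket (π' (f x)) (π' (f y)) := by
    rw [hfψ', hfψ', hfψ', hψ.2]
  refine ⟨f, ⟨hcov'.isZGradedHom_of_comp hf hbr, hfψ⟩, fun f' ⟨hf', hf'ψ⟩ => ?_⟩
  exact hcov'.eq_of_comp_eq hf'.1 hf (hf'ψ.trans hfψ.symm)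

end IsZCovering

/-- a homomorphism `φ : g → g'` of Lie superalgebras lifts to a unique
ℤ-graded homomorphism `φ̃` of the ℤ-coverings with `π' ∘ φ̃ = φ ∘ π`. -/
theorem zCovering_lift_of_hom
    (G : LieSuperAlgebra K g) (G' : LieSuperAlgebra K g')
    (P : ZGradedLieSuperAlgebra K p) (π : p →ₗ[K] g) (hcov : IsZCovering G P π)
    (P' : ZGradedLieSuperAlgebra K p') (π' : p' →ₗ[K] g') (hcov' : IsZCovering G' P' π')
    (φ : g →ₗ[K] g') (hφ : IsSuperHom G G' φ) :
    ∃! f : p →ₗ[K] p', IsZGradedHom P P' f ∧ π'.comp f = φ.comp π := by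
  exact hcov'.existsUnique_lift (hφ.comp_isHomToSuper hcov.1)
end
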